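/- arXiv:2310.01975 — 6 statements merged into one kernel-verified Lean document; each statement's English description precedes it below -/
import Mathlib

section
/- Let b, c ≥ 0 with c ≤ 1, and let a_t (t ≥ 0) be a real sequence satisfying the recursion a_{t+1} = a_t + c/(1 + b·e^{a_t}). Let x_t be the unique real solution of x_t + b·e^{x_t} = c·t + a_0 + b·e^{a_0}. Then for all t ≥ 0, x_t ≤ a_t ≤ x_t + c/(1 + b·e^{a_0}). -/
open Real

/-- Comparison between the discrete recursion `a_{t+1} = a_t + c/(1 + b e^{a_t})`
and the implicit continuous solution `x_t + b e^{x_t} = c t + a_0 + b e^{a_0}`. -/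
theorem discrete_continuous_comparison
    (b c : ℝ) (hb : 0 ≤ b) (hc0 : 0 ≤ c) (hc1 : c ≤ 1)
    (a : ℕ → ℝ) (ha : ∀ t : ℕ, a (t + 1) = a t + c / (1 + b * exp (a t)))
    (x : ℕ → ℝ)
    (hx : ∀ t : ℕ, x t + b * exp (x t) = c * t + a 0 + b * exp (a 0)) :
    ∀ t : ℕ, x t ≤ a t ∧ a t ≤ x t + c / (1 + b * exp (a 0)) := by
  have hpos : ∀ y : ℝ, (0:ℝ) < 1 + b * exp y := by
    intro y; positivity
  set d := c / (1 + b * exp (a 0)) with hd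
  have hdnn : 0 ≤ d := div_nonneg hc0 (hpos _).le
  have hf : StrictMono (fun y : ℝ => y + b * exp y) := by
    intro u v huv
    have h1 : b * exp u ≤ b * exp v :=
      mul_le_mul_of_nonneg_left (exp_le_exp.mpr huv.le) hb
    simpa using add_lt_add_of_lt_of_le huv h1
  have hδnn : ∀ t : ℕ, 0 ≤ c / (1 + b * exp (a t)) :=
    fun t => div_nonneg hc0 (hpos _).le
  have hmono : ∀ t : ℕ, a 0 ≤ a t := by
    intro t
    induction t with
    | zero => exact le_refl _
    | succ n ih =>
      rw [ha n]
      linarith [hδnn n]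
  have hδd : ∀ t : ℕ, c / (1 + b * exp (a t)) ≤ d := by
    intro t
    rw [hd]
    gcongr
    exact hmono t
  -- lower bound: f(a t) ≥ c t + f(a 0)
  have hL : ∀ t : ℕ, c * t + (a 0 + b * exp (a 0)) ≤ a t + b * exp (a t) := by
    intro t
    induction t with
    | zero => simp
    | succ n ih =>
      set δ := c / (1 + b * exp (a n)) with hδ
      have hstep : c = δ * (1 + b * exp (a n)) := by
        rw [hδ]; field_simp
      have hexp : exp (a n) * (1 + δ) ≤ exp (a n + δ) := by
        rw [exp_add]
        have := add_one_le_exp δ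
        nlinarith [exp_pos (a n)]
      have : a n + b * exp (a n) + c ≤ a (n + 1) + b * exp (a (n + 1)) := by
        rw [ha n, ← hδ]
        nlinarith [mul_le_mul_of_nonneg_left hexp hb]
      push_cast
      linarith
  -- upper bound: f(a t - d) ≤ c t + f(a 0)
  have hU : ∀ t : ℕ, (a t - d) + b * exp (a t - d) ≤ c * t + (a 0 + b * exp (a 0)) := by
    intro t
    induction t with
    | zero =>
      simp only [Nat.cast_zero, mul_zero, zero_add]
      have h1 : exp (a 0 - d) ≤ exp (a 0) := exp_le_exp.mpr (by linarith)
      nlinarith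
    | succ n ih =>
      set δ := c / (1 + b * exp (a n)) with hδ
      have hδd' : δ ≤ d := hδd n
      have hδnn' : 0 ≤ δ := hδnn n
      have hstep : c = δ * (1 + b * exp (a n)) := by
        rw [hδ]; field_simp
      -- key: exp(δ) - 1 ≤ δ * exp d
      have key : exp δ - 1 ≤ δ * exp d := by
        have h1 : -δ + 1 ≤ exp (-δ) := add_one_le_exp (-δ)
        have h2 : exp (-δ) * exp δ = 1 := by rw [← exp_add]; simp
        have h3 : exp δ ≤ exp d := exp_le_exp.mpr hδd'
        nlinarith [exp_pos δ]
      -- f(a(n+1) - d) ≤ f(a n - d) + c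
      have hstep2 : (a (n+1) - d) + b * exp (a (n+1) - d)
          ≤ (a n - d) + b * exp (a n - d) + c := by
        rw [ha n, ← hδ]
        have he : exp (a n + δ - d) = exp (a n - d) * exp δ := by
          rw [← exp_add]; ring_nf
        have hed : exp (a n - d) * exp d = exp (a n) := by
          rw [← exp_add]; ring_nf
        have h4 : b * (exp (a n - d) * (exp δ - 1)) ≤ b * (δ * exp (a n)) := by
          apply mul_le_mul_of_nonneg_left _ hb
          calc exp (a n - d) * (exp δ - 1) ≤ exp (a n - d) * (δ * exp d) :=
                mul_le_mul_of_nonneg_left key (exp_pos _).le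
            _ = δ * exp (a n) := by rw [← hed]; ring
        have : a n + δ - d + b * exp (a n + δ - d)
            = (a n - d) + b * (exp (a n - d) * exp δ) + δ := by rw [he]; ring
        rw [this]
        nlinarith
      push_cast
      linarith
  intro t
  have hxt := hx t
  constructor
  · have : x t + b * exp (x t) ≤ a t + b * exp (a t) := by
      rw [hxt]; linarith [hL t]
    exact (hf.le_iff_le).mp this
  · have : (a t - d) + b * exp (a t - d) ≤ x t + b * exp (x t) := by
      rw [hxt]; linarith [hU t]
    have := (hf.le_iff_le).mp this
    rw [hd] at *
    linarith
end

section
/- Let b ≥ 1/2 and c ≥ 0. Define continuous-time processes x_t and y_t for t ≥ 0 implicitly by x_t + b·e^{x_t} = c·t + x_0 + b·e^{x_0} and y_t + e^{y_t} = c·t + y_0 + e^{y_0}, with x_0 = y_0. Then sup_{t ≥ 0} |x_t − y_t| ≤ max{2(1 − b), b − 1}. -/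
open Real

/-- Closeness of two implicitly defined continuous processes with
perturbed exponential coefficient `b ≥ 1/2`. -/
theorem continuous_process_comparison_b
    (b c : ℝ) (hb : 1/2 ≤ b) (hc : 0 ≤ c)
    (x y : ℝ → ℝ)
    (hx : ∀ t : ℝ, 0 ≤ t → x t + b * exp (x t) = c * t + x 0 + b * exp (x 0))
    (hy : ∀ t : ℝ, 0 ≤ t → y t + exp (y t) = c * t + y 0 + exp (y 0))
    (h0 : x 0 = y 0) :
    ∀ t : ℝ, 0 ≤ t → |x t - y t| ≤ max (2 * (1 - b)) (b - 1) := by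
  intro t ht
  have hb0 : (0:ℝ) < b := by linarith
  set X := x t with hX
  set Y := y t with hY
  set A := x 0 with hA
  have hxt : X + b * exp X = c * t + A + b * exp A := hx t ht
  have hyt : Y + exp Y = c * t + A + exp A := by
    have := hy t ht; rw [← h0] at this; exact this
  have hct : 0 ≤ c * t := mul_nonneg hc ht
  -- X ≥ A
  have hXA : A ≤ X := by
    by_contra h
    push_neg at h
    have he : exp X < exp A := exp_lt_exp.mpr h
    nlinarith [mul_pos hb0 (sub_pos.2 he)]
  -- Y ≥ A
  have hYA : A ≤ Y := by
    by_contra h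
    push_neg at h
    have he : exp Y < exp A := exp_lt_exp.mpr h
    linarith
  -- key equation
  have E : X + b * exp X = Y + exp Y + (b - 1) * exp A := by linarith
  have hmax0 : (0:ℝ) ≤ max (2 * (1 - b)) (b - 1) := by
    rcases le_total b 1 with h | h
    · exact le_trans (by linarith) (le_max_left _ _)
    · exact le_trans (by linarith) (le_max_right _ _)
  rcases le_total b 1 with hb1 | hb1
  · -- b ≤ 1 : show Y ≤ X and X - Y ≤ 2(1-b)
    have hYX : Y ≤ X := by
      by_contra h
      push_neg at h
      have h1 : exp X < exp Y := exp_lt_exp.mpr h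
      have h2 : exp A ≤ exp Y := exp_le_exp.mpr (le_trans hXA h.le)
      nlinarith [mul_pos hb0 (sub_pos.2 h1),
        mul_nonneg (by linarith : (0:ℝ) ≤ 1 - b) (sub_nonneg.2 h2)]
    rw [abs_of_nonneg (by linarith)]
    rcases eq_or_lt_of_le hYX with heq | hlt
    · rw [← heq]
      simpa using hmax0
    refine le_trans ?_ (le_max_left _ _)
    have hd : 0 < X - Y := by linarith
    have hexp : exp X = exp Y * exp (X - Y) := by
      rw [← exp_add]; ring_nf
    have hAneg : (b - 1) * exp A ≤ 0 :=
      mul_nonpos_of_nonpos_of_nonneg (by linarith) (exp_pos A).le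
    have hE2 : X - Y ≤ exp Y * (1 - b * exp (X - Y)) := by
      nlinarith [E]
    have h3 : b * exp (X - Y) < 1 := by
      by_contra h
      push_neg at h
      have : exp Y * (1 - b * exp (X - Y)) ≤ 0 :=
        mul_nonpos_of_nonneg_of_nonpos (exp_pos Y).le (by linarith)
      linarith
    have h4 : 1 + (X - Y) ≤ exp (X - Y) := by
      have := add_one_le_exp (X - Y); linarith
    have h5 : b * (1 + (X - Y)) < 1 :=
      lt_of_le_of_lt (mul_le_mul_of_nonneg_left h4 hb0.le) h3
    nlinarith [mul_nonneg (by linarith : (0:ℝ) ≤ b - 1/2) hd.le]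
  · -- b ≥ 1 : show X ≤ Y and Y - X ≤ b - 1
    have hXY : X ≤ Y := by
      by_contra h
      push_neg at h
      have h1 : exp Y < exp X := exp_lt_exp.mpr h
      have h2 : exp A ≤ exp X := exp_le_exp.mpr hXA
      nlinarith [mul_nonneg (by linarith : (0:ℝ) ≤ b - 1) (sub_nonneg.2 h2)]
    rw [abs_of_nonpos (by linarith)]
    rcases eq_or_lt_of_le hXY with heq | hlt
    · rw [heq]
      simpa using hmax0
    refine le_trans ?_ (le_max_right _ _)
    have hd : 0 < Y - X := by linarith
    have hexp : exp Y = exp X * exp (Y - X) := by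
      rw [← exp_add]; ring_nf
    have hApos : 0 ≤ (b - 1) * exp A :=
      mul_nonneg (by linarith) (exp_pos A).le
    have hE2 : Y - X ≤ exp X * (b - exp (Y - X)) := by
      nlinarith [E]
    have h3 : exp (Y - X) < b := by
      by_contra h
      push_neg at h
      have : exp X * (b - exp (Y - X)) ≤ 0 :=
        mul_nonpos_of_nonneg_of_nonpos (exp_pos X).le (by linarith)
      linarith
    have h4 : 1 + (Y - X) ≤ exp (Y - X) := by
      have := add_one_le_exp (Y - X); linarith
    linarith
end

section
/- Let b ≥ 1/2 and 0 ≤ c ≤ 1. Define discrete processes m_t and n_t for t ∈ N by m_{t+1} = m_t + c/(1 + b·e^{m_t}), n_{t+1} = n_t + c/(1 + e^{n_t}), with m_0 = n_0. Then sup_{t ∈ N} |m_t − n_t| ≤ max{2(1 − b), b − 1} + 2c. -/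
open Real

/-- Closeness of two discrete processes with perturbed exponential
coefficient `b ≥ 1/2`. -/
theorem discrete_process_comparison_b
    (b c : ℝ) (hb : 1/2 ≤ b) (hc0 : 0 ≤ c) (hc1 : c ≤ 1)
    (m n : ℕ → ℝ)
    (hm : ∀ t : ℕ, m (t + 1) = m t + c / (1 + b * exp (m t)))
    (hn : ∀ t : ℕ, n (t + 1) = n t + c / (1 + exp (n t)))
    (h0 : m 0 = n 0) :
    ∀ t : ℕ, |m t - n t| ≤ max (2 * (1 - b)) (b - 1) + 2 * c := by
  set D := max (2 * (1 - b)) (b - 1) with hD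
  have hb0 : (0:ℝ) < b := by linarith
  have hD0 : 0 ≤ D := by
    rcases le_total b 1 with h | h
    · exact le_max_of_le_left (by linarith)
    · exact le_max_of_le_right (by linarith)
  have hlogD : Real.log b ≤ D := by
    rcases le_total b 1 with h | h
    · have : Real.log b ≤ 0 := Real.log_nonpos (by linarith) h
      linarith
    · exact le_trans (by linarith [Real.log_le_sub_one_of_pos hb0])
        (le_max_right _ _)
  have hnlogD : -Real.log b ≤ D := by
    rcases le_total b 1 with h | h
    · have h1 : Real.log (1/b) ≤ 1/b - 1 := Real.log_le_sub_one_of_pos (by positivity)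
      have h2 : Real.log (1/b) = -Real.log b := by rw [one_div, Real.log_inv]
      have hbi : b * (1/b) = 1 := by field_simp
      refine le_trans ?_ (le_max_left _ _)
      nlinarith [h1, hb0]
    · have : 0 ≤ Real.log b := Real.log_nonneg h
      linarith
  intro t
  induction t with
  | zero => rw [h0]; simpa using by linarith
  | succ t ih =>
    rw [abs_le] at ih ⊢
    have hdm : (0:ℝ) < 1 + b * exp (m t) := by positivity
    have hdn : (0:ℝ) < 1 + exp (n t) := by positivity
    have hsm0 : 0 ≤ c / (1 + b * exp (m t)) := by positivity
    have hsn0 : 0 ≤ c / (1 + exp (n t)) := by positivity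
    have hsm1 : c / (1 + b * exp (m t)) ≤ c := by
      apply div_le_self hc0; nlinarith [exp_pos (m t)]
    have hsn1 : c / (1 + exp (n t)) ≤ c := by
      apply div_le_self hc0; nlinarith [exp_pos (n t)]
    rw [hm t, hn t]
    by_cases h : -Real.log b ≤ m t - n t
    · -- drift is nonpositive
      have hexp : exp (n t) ≤ b * exp (m t) := by
        have hle : n t ≤ Real.log b + m t := by linarith
        calc exp (n t) ≤ exp (Real.log b + m t) := exp_le_exp.2 hle
          _ = b * exp (m t) := by rw [exp_add, exp_log hb0]
      have hdrift : c / (1 + b * exp (m t)) ≤ c / (1 + exp (n t)) := by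
        gcongr
      constructor
      · linarith [ih.2]
      · linarith [h, hsn1, hsm0, hnlogD, hc0]
    · -- drift is nonnegative
      push_neg at h
      have hexp : b * exp (m t) ≤ exp (n t) := by
        have hle : Real.log b + m t ≤ n t := by linarith
        calc b * exp (m t) = exp (Real.log b + m t) := by rw [exp_add, exp_log hb0]
          _ ≤ exp (n t) := exp_le_exp.2 hle
      have hdrift : c / (1 + exp (n t)) ≤ c / (1 + b * exp (m t)) := by
        gcongr
      constructor
      · linarith [ih.1]
      · linarith [h.le, hsm1, hsn0, hnlogD, hc0]
end

section
/- Let c_1 ≥ c_2 > 0 and define continuous processes x_t, y_t for t ≥ 0 implicitly by x_t + e^{x_t} = c_1·t + x_0 + e^{x_0} and y_t + e^{y_t} = c_2·t + y_0 + e^{y_0}, with x_0 = y_0. Then sup_{t ≥ 0} |x_t − y_t| ≤ (1 + e^{−x_0}) · (c_1 − c_2)/c_2. -/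
open Real

/-- Closeness of two implicitly defined continuous processes with
different speeds `c₁ ≥ c₂ > 0`. -/
theorem continuous_process_comparison_c
    (c₁ c₂ : ℝ) (hc : c₁ ≥ c₂) (hc₂ : 0 < c₂)
    (x y : ℝ → ℝ)
    (hx : ∀ t : ℝ, 0 ≤ t → x t + exp (x t) = c₁ * t + x 0 + exp (x 0))
    (hy : ∀ t : ℝ, 0 ≤ t → y t + exp (y t) = c₂ * t + y 0 + exp (y 0))
    (h0 : x 0 = y 0) :
    ∀ t : ℝ, 0 ≤ t → |x t - y t| ≤ (1 + exp (-(x 0))) * (c₁ - c₂) / c₂ := by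
  intro t ht
  have hx' := hx t ht
  have hy' := hy t ht
  rw [h0]
  rw [h0] at hx'
  set s := y 0 with hs
  set a := x t with ha
  set b := y t with hb
  -- exp a ≥ exp b * (a - b + 1)
  have fact1 : exp b * (a - b + 1) ≤ exp a := by
    have h := Real.add_one_le_exp (a - b)
    calc exp b * (a - b + 1) ≤ exp b * exp (a - b) :=
          mul_le_mul_of_nonneg_left h (le_of_lt (exp_pos b))
      _ = exp a := by rw [← Real.exp_add]; ring_nf
  -- exp b ≥ exp s * (b - s + 1)
  have fact2 : exp s * (b - s + 1) ≤ exp b := by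
    have h := Real.add_one_le_exp (b - s)
    calc exp s * (b - s + 1) ≤ exp s * exp (b - s) :=
          mul_le_mul_of_nonneg_left h (le_of_lt (exp_pos s))
      _ = exp b := by rw [← Real.exp_add]; ring_nf
  -- b ≥ s
  have hbs : s ≤ b := by
    by_contra hlt
    push_neg at hlt
    have : exp b < exp s := exp_lt_exp.mpr hlt
    nlinarith [mul_nonneg hc₂.le ht]
  -- a ≥ b
  have hab : b ≤ a := by
    by_contra hlt
    push_neg at hlt
    have : exp a < exp b := exp_lt_exp.mpr hlt
    nlinarith [mul_nonneg (sub_nonneg.mpr hc) ht]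
  rw [abs_of_nonneg (by linarith : (0:ℝ) ≤ a - b)]
  -- (a - b) * (1 + exp b) ≤ (c₁ - c₂) * t
  have key1 : (a - b) * (1 + exp b) ≤ (c₁ - c₂) * t := by nlinarith
  -- b - s ≤ exp (-s) * (exp b - exp s)
  have hes : exp (-s) * exp s = 1 := by rw [← Real.exp_add]; simp
  have key2 : b - s ≤ exp (-s) * (exp b - exp s) := by
    nlinarith [exp_pos s, mul_le_mul_of_nonneg_left fact2 (le_of_lt (exp_pos (-s)))]
  -- c₂ * t ≤ (1 + exp (-s)) * (1 + exp b)
  have key3 : c₂ * t ≤ (1 + exp (-s)) * (1 + exp b) := by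
    have h1 : c₂ * t = (b - s) + (exp b - exp s) := by linarith
    nlinarith [exp_pos (-s), exp_pos s, exp_pos b]
  rw [le_div_iff₀ hc₂]
  have hEpos : (0:ℝ) < 1 + exp b := by positivity
  have key4 : (a - b) * c₂ * (1 + exp b) ≤ (1 + exp (-s)) * (c₁ - c₂) * (1 + exp b) := by
    nlinarith [mul_le_mul_of_nonneg_left key1 hc₂.le,
      mul_le_mul_of_nonneg_left key3 (sub_nonneg.mpr hc),
      mul_nonneg (sub_nonneg.mpr hab) hc₂.le]
  exact le_of_mul_le_mul_right key4 hEpos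
end

section
/- Let 1 ≥ c_1 ≥ c_2 > 0 and define discrete processes m_t, n_t for t ∈ N by m_{t+1} = m_t + c_1/(1 + e^{m_t}), n_{t+1} = n_t + c_2/(1 + e^{n_t}), with m_0 = n_0. Then sup_{t ∈ N} |m_t − n_t| ≤ (1 + e^{−m_0}) · (c_1 − c_2)/c_2 + c_1 + c_2. -/
open Real

lemma step_mono (c : ℝ) (hc1 : c ≤ 1) {x y : ℝ} (hxy : x ≤ y) :
    x + c / (1 + exp x) ≤ y + c / (1 + exp y) := by
  have hA : (0:ℝ) < 1 + exp x := by positivity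
  have hB : (0:ℝ) < 1 + exp y := by positivity
  have hd : exp y - exp x ≤ exp y * (y - x) := by
    have h1 : 1 - (y - x) ≤ exp (x - y) := by
      have := Real.add_one_le_exp (x - y); linarith
    have h2 : exp x = exp y * exp (x - y) := by rw [← Real.exp_add]; ring_nf
    nlinarith [Real.exp_pos y]
  have key : c / (1 + exp x) - c / (1 + exp y) ≤ y - x := by
    rw [div_sub_div _ _ (ne_of_gt hA) (ne_of_gt hB), div_le_iff₀ (by positivity)]
    have hxy' : exp x ≤ exp y := Real.exp_le_exp.mpr hxy
    nlinarith [Real.exp_pos x, Real.exp_pos y, mul_nonneg (sub_nonneg.mpr hxy) (Real.exp_pos x).le]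
  linarith

/-- Closeness of two discrete processes with different speeds `1 ≥ c₁ ≥ c₂ > 0`. -/
theorem discrete_process_comparison_c
    (c₁ c₂ : ℝ) (hc1 : c₁ ≤ 1) (hc : c₂ ≤ c₁) (hc₂ : 0 < c₂)
    (m n : ℕ → ℝ)
    (hm : ∀ t : ℕ, m (t + 1) = m t + c₁ / (1 + exp (m t)))
    (hn : ∀ t : ℕ, n (t + 1) = n t + c₂ / (1 + exp (n t)))
    (h0 : m 0 = n 0) :
    ∀ t : ℕ, |m t - n t| ≤ (1 + exp (-(m 0))) * (c₁ - c₂) / c₂ + c₁ + c₂ := by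
  have hc₁ : 0 < c₁ := lt_of_lt_of_le hc₂ hc
  set B : ℝ := (1 + exp (-(m 0))) * (c₁ - c₂) / c₂ with hB
  have hB0 : 0 ≤ B := by
    apply div_nonneg _ hc₂.le
    have := Real.exp_pos (-(m 0))
    nlinarith
  -- n is monotone, so n t ≥ n 0
  have hnmono : ∀ t : ℕ, n 0 ≤ n t := by
    intro t
    induction t with
    | zero => exact le_refl _
    | succ t ih =>
      rw [hn t]
      have : 0 < c₂ / (1 + exp (n t)) := by positivity
      linarith
  -- key inequality
  have hkey : ∀ t : ℕ, c₁ / (1 + exp (n t + B)) ≤ c₂ / (1 + exp (n t)) := by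
    intro t
    have hA : (0:ℝ) < 1 + exp (n t + B) := by positivity
    have hD : (0:ℝ) < 1 + exp (n t) := by positivity
    rw [div_le_div_iff₀ hA hD]
    have he1 : exp (n t + B) = exp (n t) * exp B := Real.exp_add _ _
    have he2 : 1 + B ≤ exp B := by have := Real.add_one_le_exp B; linarith
    have he3 : (1:ℝ) ≤ exp (n t) * exp (-(m 0)) := by
      rw [← Real.exp_add]
      have : 0 ≤ n t + -(m 0) := by have := hnmono t; rw [h0]; linarith
      calc (1:ℝ) = exp 0 := by simp
        _ ≤ _ := Real.exp_le_exp.mpr this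
    have hBeq : c₂ * B = (1 + exp (-(m 0))) * (c₁ - c₂) := by
      rw [hB]; field_simp
    nlinarith [Real.exp_pos (n t), Real.exp_pos (-(m 0)), mul_le_mul_of_nonneg_left he2 (mul_pos hc₂ (Real.exp_pos (n t))).le]
  -- lower bound: n t ≤ m t
  have hlow : ∀ t : ℕ, n t ≤ m t := by
    intro t
    induction t with
    | zero => rw [h0]
    | succ t ih =>
      rw [hm t, hn t]
      calc n t + c₂ / (1 + exp (n t)) ≤ n t + c₁ / (1 + exp (n t)) := by
            have hD : (0:ℝ) < 1 + exp (n t) := by positivity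
            gcongr
        _ ≤ m t + c₁ / (1 + exp (m t)) := step_mono c₁ hc1 ih
  -- upper bound: m t ≤ n t + B
  have hup : ∀ t : ℕ, m t ≤ n t + B := by
    intro t
    induction t with
    | zero => rw [h0]; linarith
    | succ t ih =>
      rw [hm t, hn t]
      calc m t + c₁ / (1 + exp (m t)) ≤ (n t + B) + c₁ / (1 + exp (n t + B)) :=
            step_mono c₁ hc1 ih
        _ ≤ (n t + B) + c₂ / (1 + exp (n t)) := by have := hkey t; linarith
        _ = n t + c₂ / (1 + exp (n t)) + B := by ring
  intro t
  rw [abs_of_nonneg (by linarith [hlow t])]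
  have := hup t
  linarith
end

section
/- For 0 < x < 0.1, it holds that ((1 + √2·x)/(1 − √2·x))·e^{−3x} < 1. -/
open Real

/-- For `0 < x < 0.1`, `((1 + √2 x)/(1 - √2 x)) e^{-3x} < 1`. -/
theorem elementary_ineq_two (x : ℝ) (hx0 : 0 < x) (hx1 : x < 0.1) :
    ((1 + Real.sqrt 2 * x) / (1 - Real.sqrt 2 * x)) * exp (-3 * x) < 1 := by
  have hs2 : Real.sqrt 2 ^ 2 = 2 := Real.sq_sqrt (by norm_num)
  have hs0 : 0 < Real.sqrt 2 := Real.sqrt_pos.mpr (by norm_num)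
  have hsu : Real.sqrt 2 < 1.415 := by nlinarith [hs2]
  have hb : 0 < 1 - Real.sqrt 2 * x := by nlinarith
  have hexp : (1 + x) ^ 3 ≤ exp (3 * x) := by
    have h1 : 1 + x ≤ exp x := by
      have := Real.add_one_le_exp x; linarith
    have h2 : exp x ^ 3 = exp (3 * x) := by
      rw [← Real.exp_nat_mul]; ring_nf
    calc (1 + x) ^ 3 ≤ exp x ^ 3 := by
          apply pow_le_pow_left₀ (by linarith) h1
      _ = exp (3 * x) := h2
  have key : 1 + Real.sqrt 2 * x < (1 - Real.sqrt 2 * x) * exp (3 * x) := by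
    have hpoly : 1 + Real.sqrt 2 * x < (1 - Real.sqrt 2 * x) * (1 + x) ^ 3 := by
      nlinarith [sq_nonneg x, mul_pos hx0 hx0, mul_pos (mul_pos hx0 hx0) hx0]
    calc 1 + Real.sqrt 2 * x < (1 - Real.sqrt 2 * x) * (1 + x) ^ 3 := hpoly
      _ ≤ (1 - Real.sqrt 2 * x) * exp (3 * x) := by
          exact mul_le_mul_of_nonneg_left hexp hb.le
  rw [div_mul_eq_mul_div, div_lt_one hb]
  have he : exp (-3 * x) * exp (3 * x) = 1 := by
    rw [← Real.exp_add]; ring_nf; exact Real.exp_zero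
  have hE : 0 < exp (3 * x) := Real.exp_pos _
  calc (1 + Real.sqrt 2 * x) * exp (-3 * x)
      < ((1 - Real.sqrt 2 * x) * exp (3 * x)) * exp (-3 * x) := by
        apply mul_lt_mul_of_pos_right key (Real.exp_pos _)
    _ = 1 - Real.sqrt 2 * x := by
        rw [mul_assoc, mul_comm (exp (3*x)), he, mul_one]
end
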